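/- (Log-Sobolev inequality on the Hamming cube.) Let g be a nonnegative function on Ω₂ⁿ. Then 𝔼[g²(log g² − log 𝔼g²)] ≤ 2·𝔼[Σ_{i=1}^n (D_i g(x))²]. -/

import Mathlib

/-- The Hamming cube `Ω₂ⁿ = {-1,1}ⁿ`, encoded as `Fin n → Bool`. -/
abbrev Cube (n : ℕ) : Type := Fin n → Bool

/-- The sign `±1` associated to a Boolean coordinate. -/
def sgn (b : Bool) : ℝ := if b then 1 else -1

/-- Expectation with respect to the uniform probability measure on the Hamming cube. -/
noncomputable def expect {n : ℕ} (f : Cube n → ℝ) : ℝ :=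
  (∑ x : Cube n, f x) / 2 ^ n

/-- The `i`-th discrete derivative `D_i f(x) = (f(x) - f(σ_i x))/2`, where `σ_i`
flips the `i`-th coordinate. -/
noncomputable def Di {n : ℕ} {E : Type*} [AddCommGroup E] [Module ℝ E]
    (f : Cube n → E) (i : Fin n) (x : Cube n) : E :=
  ((2 : ℝ)⁻¹) • (f x - f (Function.update x i (!x i)))

section LogSobolevAux


open Real

lemma self_le_sinh {t : ℝ} (ht : 0 ≤ t) : t ≤ Real.sinh t := by
  rcases ht.eq_or_lt with h | h
  · simp [← h]
  · exact (Real.self_lt_sinh_iff.2 h).le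

lemma log_ratio_le {u : ℝ} (h0 : 0 ≤ u) (h1 : u < 1) :
    Real.log (1 + u) - Real.log (1 - u) ≤ 2 * u / Real.sqrt (1 - u ^ 2) := by
  have hu2 : (0:ℝ) < 1 - u ^ 2 := by nlinarith
  have hs : 0 < Real.sqrt (1 - u ^ 2) := Real.sqrt_pos.2 hu2
  set x := u / Real.sqrt (1 - u ^ 2) with hx
  have hx0 : 0 ≤ x := div_nonneg h0 hs.le
  have hkey : Real.arsinh x = (Real.log (1 + u) - Real.log (1 - u)) / 2 := by
    have h1x : 1 + x ^ 2 = 1 / (1 - u ^ 2) := by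
      rw [hx, div_pow, Real.sq_sqrt hu2.le]
      field_simp
      ring
    have hsqrt : Real.sqrt (1 + x ^ 2) = 1 / Real.sqrt (1 - u ^ 2) := by
      rw [h1x, one_div, Real.sqrt_inv, one_div]
    rw [Real.arsinh, hsqrt, hx]
    have : u / Real.sqrt (1 - u ^ 2) + 1 / Real.sqrt (1 - u ^ 2)
        = (1 + u) / Real.sqrt (1 - u ^ 2) := by ring
    rw [this, Real.log_div (by positivity) (ne_of_gt hs),
      Real.log_sqrt hu2.le]
    have : (1:ℝ) - u ^ 2 = (1 + u) * (1 - u) := by ring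
    rw [this, Real.log_mul (by positivity) (by nlinarith)]
    ring
  have := self_le_sinh (Real.arsinh_nonneg_iff.2 hx0)
  rw [Real.sinh_arsinh, hkey] at this
  rw [hx] at this
  calc Real.log (1 + u) - Real.log (1 - u)
      = 2 * ((Real.log (1 + u) - Real.log (1 - u)) / 2) := by ring
    _ ≤ 2 * (u / Real.sqrt (1 - u ^ 2)) := by linarith
    _ = 2 * u / Real.sqrt (1 - u ^ 2) := by ring

noncomputable def Fent (u : ℝ) : ℝ :=
  2 - 2 * Real.sqrt (1 - u ^ 2) - (1 + u) * Real.log (1 + u) - (1 - u) * Real.log (1 - u)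

lemma Fent_hasDerivAt {u : ℝ} (h0 : -1 < u) (h1 : u < 1) :
    HasDerivAt Fent
      (2 * u / Real.sqrt (1 - u ^ 2) - Real.log (1 + u) + Real.log (1 - u)) u := by
  have hu2 : (0:ℝ) < 1 - u ^ 2 := by nlinarith
  have hp : (0:ℝ) < 1 + u := by linarith
  have hm : (0:ℝ) < 1 - u := by linarith
  have hs : 0 < Real.sqrt (1 - u ^ 2) := Real.sqrt_pos.2 hu2
  have hsq : HasDerivAt (fun v : ℝ => Real.sqrt (1 - v ^ 2))
      ((-2 * u) / (2 * Real.sqrt (1 - u ^ 2))) u := by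
    have h1 : HasDerivAt (fun v : ℝ => 1 - v ^ 2) (-2 * u) u := by
      simpa using ((hasDerivAt_pow 2 u).const_sub 1)
    exact h1.sqrt (ne_of_gt hu2)
  have hlp : HasDerivAt (fun v : ℝ => Real.log (1 + v)) (1 / (1 + u)) u := by
    have h1 : HasDerivAt (fun v : ℝ => 1 + v) 1 u := by
      simpa using (hasDerivAt_id u).const_add 1
    simpa [Function.comp_def] using (Real.hasDerivAt_log (ne_of_gt hp)).comp u h1
  have hlm : HasDerivAt (fun v : ℝ => Real.log (1 - v)) (-(1 / (1 - u))) u := by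
    have h1 : HasDerivAt (fun v : ℝ => 1 - v) (-1) u := by
      simpa using ((hasDerivAt_id u).const_sub 1)
    simpa [Function.comp_def] using (Real.hasDerivAt_log (ne_of_gt hm)).comp u h1
  have h2 : HasDerivAt (fun v : ℝ => (1 + v) * Real.log (1 + v))
      (Real.log (1 + u) + 1) u := by
    have := (((hasDerivAt_id u).const_add 1).mul hlp)
    refine this.congr_deriv ?_
    rw [id_eq, mul_one_div_cancel (ne_of_gt hp)]; ring
  have h3 : HasDerivAt (fun v : ℝ => (1 - v) * Real.log (1 - v))
      (-Real.log (1 - u) - 1) u := by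
    have := (((hasDerivAt_id u).const_sub 1).mul hlm)
    refine this.congr_deriv ?_
    rw [id_eq, mul_neg, mul_one_div_cancel (ne_of_gt hm)]; ring
  have := (((hsq.const_mul 2).const_sub 2).sub h2).sub h3
  refine this.congr_deriv ?_
  field_simp
  ring

lemma Fent_nonneg {u : ℝ} (h0 : 0 ≤ u) (h1 : u < 1) : 0 ≤ Fent u := by
  have hmono : MonotoneOn Fent (Set.Ico (0:ℝ) 1) := by
    apply monotoneOn_of_deriv_nonneg (convex_Ico 0 1)
    · intro x hx
      exact (Fent_hasDerivAt (by linarith [hx.1]) hx.2).continuousAt.continuousWithinAt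
    · intro x hx
      rw [interior_Ico] at hx
      exact (Fent_hasDerivAt (by linarith [hx.1]) hx.2).differentiableAt.differentiableWithinAt
    · intro x hx
      rw [interior_Ico] at hx
      rw [(Fent_hasDerivAt (by linarith [hx.1]) hx.2).deriv]
      have := log_ratio_le hx.1.le hx.2
      linarith
  have h00 : Fent 0 = 0 := by simp [Fent]
  have := hmono (Set.mem_Ico.2 ⟨le_refl 0, one_pos⟩) (Set.mem_Ico.2 ⟨h0, h1⟩) h0
  linarith [h00 ▸ this]

/-- The two-point log-Sobolev inequality. -/
lemma two_point (a b : ℝ) (ha : 0 ≤ a) (hb : 0 ≤ b) :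
    a ^ 2 * Real.log (a ^ 2) + b ^ 2 * Real.log (b ^ 2)
      - (a ^ 2 + b ^ 2) * Real.log ((a ^ 2 + b ^ 2) / 2) ≤ (a - b) ^ 2 := by
  -- WLOG b ≤ a
  wlog hba : b ≤ a with H
  · have := H b a hb ha (le_of_not_ge hba)
    calc a ^ 2 * Real.log (a ^ 2) + b ^ 2 * Real.log (b ^ 2)
        - (a ^ 2 + b ^ 2) * Real.log ((a ^ 2 + b ^ 2) / 2)
        = b ^ 2 * Real.log (b ^ 2) + a ^ 2 * Real.log (a ^ 2)
        - (b ^ 2 + a ^ 2) * Real.log ((b ^ 2 + a ^ 2) / 2) := by ring_nf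
      _ ≤ (b - a) ^ 2 := this
      _ = (a - b) ^ 2 := by ring
  rcases eq_or_lt_of_le hb with hb0 | hb0
  · -- b = 0
    rcases eq_or_lt_of_le ha with ha0 | ha0
    · simp [← ha0, ← hb0]
    · rw [← hb0]
      have hlog : Real.log (a ^ 2 / 2) = Real.log (a ^ 2) - Real.log 2 :=
        Real.log_div (by positivity) two_ne_zero
      have h2 : Real.log 2 ≤ 1 := by
        have := Real.log_le_sub_one_of_pos (by norm_num : (0:ℝ) < 2)
        linarith
      have ha2 : (0:ℝ) ≤ a ^ 2 := sq_nonneg a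
      simp only [ne_eq, OfNat.ofNat_ne_zero, not_false_iff, zero_pow, zero_mul, add_zero]
      rw [hlog]
      nlinarith
  · -- 0 < b ≤ a
    have ha0 : 0 < a := lt_of_lt_of_le hb0 hba
    set s : ℝ := a ^ 2 + b ^ 2 with hs
    have hspos : 0 < s := by positivity
    set u : ℝ := (a ^ 2 - b ^ 2) / s with hu
    have hu0 : 0 ≤ u := by
      apply div_nonneg _ hspos.le
      nlinarith
    have hu1 : u < 1 := by
      rw [hu, div_lt_one hspos]
      nlinarith
    set m : ℝ := s / 2 with hm
    have hmpos : 0 < m := by positivity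
    have hA : m * (1 + u) = a ^ 2 := by
      rw [hm, hu]; field_simp; ring
    have hB : m * (1 - u) = b ^ 2 := by
      rw [hm, hu]; field_simp; ring
    have h1u : (0:ℝ) < 1 + u := by linarith
    have h1u' : (0:ℝ) < 1 - u := by linarith
    have hsqrt : Real.sqrt (1 - u ^ 2) = 2 * a * b / s := by
      rw [show (1:ℝ) - u ^ 2 = (2 * a * b / s) ^ 2 by
        rw [hu]; field_simp; ring]
      exact Real.sqrt_sq (by positivity)
    have hF := Fent_nonneg hu0 hu1
    rw [Fent, hsqrt] at hF
    -- multiply by m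
    have hlogp : Real.log (1 + u) = Real.log (a ^ 2) - Real.log m := by
      rw [← hA, Real.log_mul (ne_of_gt hmpos) (ne_of_gt h1u)]
      ring
    have hlogm : Real.log (1 - u) = Real.log (b ^ 2) - Real.log m := by
      rw [← hB, Real.log_mul (ne_of_gt hmpos) (ne_of_gt h1u')]
      ring
    rw [hlogp, hlogm] at hF
    have hmul := mul_nonneg hmpos.le hF
    have hms : m * (2 * a * b / s) = a * b := by
      rw [hm]; field_simp
    have key : m * (2 - 2 * (2 * a * b / s) - (1 + u) * (Real.log (a ^ 2) - Real.log m)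
        - (1 - u) * (Real.log (b ^ 2) - Real.log m))
        = (a - b) ^ 2 - (a ^ 2 * Real.log (a ^ 2) + b ^ 2 * Real.log (b ^ 2)
            - s * Real.log m) := by
      linear_combination (Real.log m - Real.log (a ^ 2)) * hA
        + (Real.log m - Real.log (b ^ 2)) * hB - 2 * hms + 2 * hm
        + (Real.log m - 1) * hs
    rw [key] at hmul
    have hlogms : Real.log m = Real.log ((a ^ 2 + b ^ 2) / 2) := by rw [hm, hs]
    linarith

end LogSobolevAux


lemma expect_nonneg {n : ℕ} {f : Cube n → ℝ} (h : ∀ x, 0 ≤ f x) : 0 ≤ expect f :=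
  div_nonneg (Finset.sum_nonneg fun x _ => h x) (by positivity)

lemma expect_add {n : ℕ} (f g : Cube n → ℝ) :
    expect (fun x => f x + g x) = expect f + expect g := by
  simp [expect, Finset.sum_add_distrib, add_div]

lemma expect_mul_const {n : ℕ} (f : Cube n → ℝ) (c : ℝ) :
    expect (fun x => f x * c) = expect f * c := by
  simp only [expect, ← Finset.sum_mul]
  ring

lemma expect_mono {n : ℕ} {f g : Cube n → ℝ} (h : ∀ x, f x ≤ g x) : expect f ≤ expect g := by
  unfold expect
  exact (div_le_div_iff_of_pos_right (by positivity)).2 (Finset.sum_le_sum fun x _ => h x)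

lemma expect_succ {n : ℕ} (f : Cube (n + 1) → ℝ) :
    expect f = (expect (fun y => f (Fin.cons true y))
      + expect (fun y => f (Fin.cons false y))) / 2 := by
  have h : ∑ x : Cube (n + 1), f x = ∑ p : Bool × Cube n, f (Fin.cons p.1 p.2) :=
    (Fintype.sum_equiv (Fin.consEquiv (fun _ => Bool)) _ _ (fun p => rfl)).symm
  rw [expect, h, Fintype.sum_prod_type, Fintype.sum_bool, expect, expect]
  rw [pow_succ]
  field_simp

lemma Di_succ {n : ℕ} (g : Cube (n + 1) → ℝ) (i : Fin n) (b : Bool) (y : Cube n) :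
    Di g i.succ (Fin.cons b y) = Di (fun z => g (Fin.cons b z)) i y := by
  simp only [Di]
  congr 2
  rw [Fin.cons_succ, ← Fin.cons_update]

lemma Di_zero {n : ℕ} (g : Cube (n + 1) → ℝ) (b : Bool) (y : Cube n) :
    Di g 0 (Fin.cons b y) = (2 : ℝ)⁻¹ • (g (Fin.cons b y) - g (Fin.cons (!b) y)) := by
  simp only [Di, Fin.cons_zero, Fin.update_cons_zero]

lemma expect_cauchy_schwarz {n : ℕ} (f g : Cube n → ℝ) :
    expect (fun x => f x * g x) ≤
      Real.sqrt (expect fun x => f x ^ 2) * Real.sqrt (expect fun x => g x ^ 2) := by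
  have h2 : (expect fun x => f x * g x) ^ 2 ≤
      (expect fun x => f x ^ 2) * expect fun x => g x ^ 2 := by
    have hcs := Finset.sum_mul_sq_le_sq_mul_sq Finset.univ f g
    unfold expect
    calc ((∑ x : Cube n, f x * g x) / 2 ^ n) ^ 2
        = (∑ x : Cube n, f x * g x) ^ 2 / ((2 ^ n : ℝ) * 2 ^ n) := by ring
      _ ≤ ((∑ x : Cube n, f x ^ 2) * ∑ x : Cube n, g x ^ 2) / ((2 ^ n : ℝ) * 2 ^ n) := by
          gcongr
      _ = (∑ x : Cube n, f x ^ 2) / 2 ^ n * ((∑ x : Cube n, g x ^ 2) / 2 ^ n) := by ring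
  calc expect (fun x => f x * g x) ≤ |expect (fun x => f x * g x)| := le_abs_self _
    _ = Real.sqrt ((expect fun x => f x * g x) ^ 2) := (Real.sqrt_sq_eq_abs _).symm
    _ ≤ Real.sqrt ((expect fun x => f x ^ 2) * expect fun x => g x ^ 2) :=
        Real.sqrt_le_sqrt h2
    _ = Real.sqrt (expect fun x => f x ^ 2) * Real.sqrt (expect fun x => g x ^ 2) :=
        Real.sqrt_mul (expect_nonneg fun x => sq_nonneg _) _

/-- **(Gross's log-Sobolev inequality on the Hamming cube.)** For every nonnegative
function `g` on `Ω₂ⁿ`,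
`𝔼[g²(log g² − log 𝔼g²)] ≤ 2·𝔼[Σᵢ (D_i g)²] = 2‖∇g‖²_{L²}`. -/
theorem log_sobolev_hamming {n : ℕ} (g : Cube n → ℝ) (hg : ∀ x, 0 ≤ g x) :
    expect (fun x => g x ^ 2 *
        (Real.log (g x ^ 2) - Real.log (expect (fun y => g y ^ 2)))) ≤
      2 * expect (fun x => ∑ i, (Di g i x) ^ 2) := by
  induction n with
  | zero =>
    have hLHS : expect (fun x => g x ^ 2 *
        (Real.log (g x ^ 2) - Real.log (expect (fun y => g y ^ 2)))) = 0 := by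
      have hE : ∀ f : Cube 0 → ℝ, expect f = f default := by
        intro f
        rw [expect, Fintype.sum_unique]
        simp only [pow_zero, div_one]
        exact congrArg f (Subsingleton.elim _ _)
      rw [hE]
      rw [hE (fun y => g y ^ 2)]
      simp
    have hRHS : expect (fun x : Cube 0 => ∑ i, (Di g i x) ^ 2) = 0 := by
      have : (fun x : Cube 0 => ∑ i : Fin 0, (Di g i x) ^ 2) = fun _ => (0:ℝ) := by
        funext x
        simp
      rw [this, expect]
      simp
    rw [hLHS, hRHS]
    norm_num
  | succ n ih =>
    set M : ℝ := expect (fun y : Cube (n+1) => g y ^ 2) with hMdef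
    set m1 : ℝ := expect (fun y : Cube n => g (Fin.cons true y) ^ 2) with hm1def
    set m0 : ℝ := expect (fun y : Cube n => g (Fin.cons false y) ^ 2) with hm0def
    have hm1 : 0 ≤ m1 := expect_nonneg fun y => sq_nonneg _
    have hm0 : 0 ≤ m0 := expect_nonneg fun y => sq_nonneg _
    have hM : M = (m1 + m0) / 2 := expect_succ (fun x => g x ^ 2)
    -- split the LHS
    have hsplit : expect (fun x : Cube (n+1) => g x ^ 2 * (Real.log (g x ^ 2) - Real.log M))
        = (expect (fun y : Cube n =>
              g (Fin.cons true y) ^ 2 * (Real.log (g (Fin.cons true y) ^ 2) - Real.log M))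
          + expect (fun y : Cube n =>
              g (Fin.cons false y) ^ 2 * (Real.log (g (Fin.cons false y) ^ 2) - Real.log M))) / 2 :=
      expect_succ _
    -- entropy decomposition on each half
    have hEt : expect (fun y : Cube n =>
          g (Fin.cons true y) ^ 2 * (Real.log (g (Fin.cons true y) ^ 2) - Real.log M))
        = expect (fun y : Cube n =>
            g (Fin.cons true y) ^ 2 * (Real.log (g (Fin.cons true y) ^ 2) - Real.log m1))
          + m1 * (Real.log m1 - Real.log M) := by
      have h1 : (fun y : Cube n =>
          g (Fin.cons true y) ^ 2 * (Real.log (g (Fin.cons true y) ^ 2) - Real.log M))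
        = fun y : Cube n =>
            g (Fin.cons true y) ^ 2 * (Real.log (g (Fin.cons true y) ^ 2) - Real.log m1)
          + g (Fin.cons true y) ^ 2 * (Real.log m1 - Real.log M) := by
        funext y; ring
      rw [h1, expect_add, expect_mul_const]
    have hEf : expect (fun y : Cube n =>
          g (Fin.cons false y) ^ 2 * (Real.log (g (Fin.cons false y) ^ 2) - Real.log M))
        = expect (fun y : Cube n =>
            g (Fin.cons false y) ^ 2 * (Real.log (g (Fin.cons false y) ^ 2) - Real.log m0))
          + m0 * (Real.log m0 - Real.log M) := by
      have h1 : (fun y : Cube n =>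
          g (Fin.cons false y) ^ 2 * (Real.log (g (Fin.cons false y) ^ 2) - Real.log M))
        = fun y : Cube n =>
            g (Fin.cons false y) ^ 2 * (Real.log (g (Fin.cons false y) ^ 2) - Real.log m0)
          + g (Fin.cons false y) ^ 2 * (Real.log m0 - Real.log M) := by
        funext y; ring
      rw [h1, expect_add, expect_mul_const]
    -- induction hypothesis on each half
    have iht : expect (fun y : Cube n =>
          g (Fin.cons true y) ^ 2 * (Real.log (g (Fin.cons true y) ^ 2) - Real.log m1))
        ≤ 2 * expect (fun y : Cube n =>
            ∑ i, (Di (fun z => g (Fin.cons true z)) i y) ^ 2) :=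
      ih (fun z => g (Fin.cons true z)) (fun z => hg _)
    have ihf : expect (fun y : Cube n =>
          g (Fin.cons false y) ^ 2 * (Real.log (g (Fin.cons false y) ^ 2) - Real.log m0))
        ≤ 2 * expect (fun y : Cube n =>
            ∑ i, (Di (fun z => g (Fin.cons false z)) i y) ^ 2) :=
      ih (fun z => g (Fin.cons false z)) (fun z => hg _)
    -- RHS decomposition
    have hsum : expect (fun x : Cube (n+1) => ∑ i, (Di g i x) ^ 2)
        = expect (fun x : Cube (n+1) => (Di g 0 x) ^ 2)
          + expect (fun x : Cube (n+1) => ∑ i : Fin n, (Di g i.succ x) ^ 2) := by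
      rw [← expect_add]
      congr 1
      funext x
      exact Fin.sum_univ_succ _
    have hD0 : expect (fun x : Cube (n+1) => (Di g 0 x) ^ 2)
        = expect (fun y : Cube n =>
            (g (Fin.cons true y) - g (Fin.cons false y)) ^ 2) / 4 := by
      have h := expect_succ (fun x : Cube (n+1) => (Di g 0 x) ^ 2)
      have ht : (fun y : Cube n => (Di g 0 (Fin.cons true y)) ^ 2)
          = fun y : Cube n => (g (Fin.cons true y) - g (Fin.cons false y)) ^ 2 * (1/4) := by
        funext y
        rw [Di_zero]
        simp only [Bool.not_true, smul_eq_mul]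
        ring
      have hf : (fun y : Cube n => (Di g 0 (Fin.cons false y)) ^ 2)
          = fun y : Cube n => (g (Fin.cons true y) - g (Fin.cons false y)) ^ 2 * (1/4) := by
        funext y
        rw [Di_zero]
        simp only [Bool.not_false, smul_eq_mul]
        ring
      rw [h, ht, hf, expect_mul_const]
      ring
    have hDsucc : expect (fun x : Cube (n+1) => ∑ i : Fin n, (Di g i.succ x) ^ 2)
        = (expect (fun y : Cube n => ∑ i, (Di (fun z => g (Fin.cons true z)) i y) ^ 2)
          + expect (fun y : Cube n => ∑ i, (Di (fun z => g (Fin.cons false z)) i y) ^ 2)) / 2 := by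
      have h := expect_succ (fun x : Cube (n+1) => ∑ i : Fin n, (Di g i.succ x) ^ 2)
      have e1 : (fun y : Cube n => ∑ i : Fin n, (Di g i.succ (Fin.cons true y)) ^ 2)
          = fun y : Cube n => ∑ i, (Di (fun z => g (Fin.cons true z)) i y) ^ 2 := by
        funext y
        exact Finset.sum_congr rfl fun i _ => by rw [Di_succ]
      have e0 : (fun y : Cube n => ∑ i : Fin n, (Di g i.succ (Fin.cons false y)) ^ 2)
          = fun y : Cube n => ∑ i, (Di (fun z => g (Fin.cons false z)) i y) ^ 2 := by
        funext y
        exact Finset.sum_congr rfl fun i _ => by rw [Di_succ]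
      rw [h, e1, e0]
    -- the middle (two-point + Cauchy-Schwarz) estimate
    have hmid : m1 * (Real.log m1 - Real.log M) + m0 * (Real.log m0 - Real.log M)
        ≤ expect (fun y : Cube n => (g (Fin.cons true y) - g (Fin.cons false y)) ^ 2) := by
      have hexp : expect (fun y : Cube n =>
            (g (Fin.cons true y) - g (Fin.cons false y)) ^ 2)
          = m1 + m0 - 2 * expect (fun y : Cube n =>
              g (Fin.cons true y) * g (Fin.cons false y)) := by
        have h1 : (fun y : Cube n => (g (Fin.cons true y) - g (Fin.cons false y)) ^ 2)
            = fun y : Cube n => g (Fin.cons true y) ^ 2 + (g (Fin.cons false y) ^ 2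
                + (g (Fin.cons true y) * g (Fin.cons false y)) * (-2)) := by
          funext y; ring
        rw [h1, expect_add, expect_add, expect_mul_const]
        ring
      have hcs := expect_cauchy_schwarz (fun y : Cube n => g (Fin.cons true y))
        (fun y : Cube n => g (Fin.cons false y))
      have htp := two_point (Real.sqrt m1) (Real.sqrt m0)
        (Real.sqrt_nonneg _) (Real.sqrt_nonneg _)
      rw [Real.sq_sqrt hm1, Real.sq_sqrt hm0] at htp
      have hab : (Real.sqrt m1 - Real.sqrt m0) ^ 2
          = m1 + m0 - 2 * (Real.sqrt m1 * Real.sqrt m0) := by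
        have := Real.sq_sqrt hm1
        have := Real.sq_sqrt hm0
        nlinarith [Real.sq_sqrt hm1, Real.sq_sqrt hm0]
      rw [hab] at htp
      have hMlog : Real.log ((m1 + m0) / 2) = Real.log M := by rw [hM]
      rw [hMlog] at htp
      rw [hexp]
      linarith
    -- put everything together
    rw [hsplit, hEt, hEf]
    rw [hsum, hD0, hDsucc]
    linarith
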